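/- Define the Libra loss L_Lib(p,y) = log(1 - Σ_i y_i p_i) - (1/k)·Σ_i y_i log(p_i), where k = Σ_i y_i ≥ 1 and p = softmax(z). Then for every j, ∂L_Lib/∂z_j = -1/k if y_j = 1, and ∂L_Lib/∂z_j = p_j/(1 - Σ_i y_i p_i) if y_j = 0. -/

import Mathlib

noncomputable def softmax {m : ℕ} (z : Fin m → ℝ) (i : Fin m) : ℝ :=
  Real.exp (z i) / ∑ k, Real.exp (z k)

lemma softmax_pos {m : ℕ} (z : Fin m → ℝ) (i : Fin m) : 0 < softmax z i := by
  have hE : 0 < ∑ k, Real.exp (z k) :=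
    Finset.sum_pos (fun k _ => Real.exp_pos _) ⟨i, Finset.mem_univ i⟩
  exact div_pos (Real.exp_pos _) hE

lemma softmax_deriv {m : ℕ} (z : Fin m → ℝ) (j i : Fin m) :
    HasDerivAt (fun t => softmax (Function.update z j t) i)
      (softmax z i * ((if i = j then 1 else 0) - softmax z j)) (z j) := by
  have hEpos : 0 < ∑ kk, Real.exp (z kk) :=
    Finset.sum_pos (fun k _ => Real.exp_pos _) ⟨j, Finset.mem_univ j⟩
  have hE : HasDerivAt (fun t => ∑ kk, Real.exp (Function.update z j t kk))
      (Real.exp (z j)) (z j) := by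
    have h1 : (fun t => ∑ kk, Real.exp (Function.update z j t kk))
        = fun t => Real.exp t + ∑ kk ∈ Finset.univ.erase j, Real.exp (z kk) := by
      funext t
      rw [← Finset.add_sum_erase _ _ (Finset.mem_univ j), Function.update_self]
      congr 1
      exact Finset.sum_congr rfl fun kk hk => by
        rw [Function.update_of_ne (Finset.ne_of_mem_erase hk)]
    rw [h1]
    exact (Real.hasDerivAt_exp (z j)).add_const _
  have hN : HasDerivAt (fun t => Real.exp (Function.update z j t i))
      (if i = j then Real.exp (z j) else 0) (z j) := by
    by_cases h : i = j
    · have hf : (fun t => Real.exp (Function.update z j t i)) = Real.exp := by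
        funext t; rw [h, Function.update_self]
      rw [if_pos h, hf]
      exact Real.hasDerivAt_exp (z j)
    · have hf : (fun t => Real.exp (Function.update z j t i)) = fun _ => Real.exp (z i) := by
        funext t; rw [Function.update_of_ne h]
      rw [if_neg h, hf]
      exact hasDerivAt_const _ _
  have hd : (fun t => ∑ kk, Real.exp (Function.update z j t kk)) (z j) ≠ 0 := by
    simp only [Function.update_eq_self]
    exact hEpos.ne'
  have hdiv := hN.div hE hd
  have hfun : (fun t => Real.exp (Function.update z j t i) /
      ∑ kk, Real.exp (Function.update z j t kk))
      = fun t => softmax (Function.update z j t) i := by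
    funext t; rfl
  rw [show ((fun t => Real.exp (Function.update z j t i)) / fun t => ∑ kk, Real.exp (Function.update z j t kk)) = _ from hfun] at hdiv
  refine hdiv.congr_deriv (Eq.symm ?_)
  simp only [Function.update_eq_self]
  simp only [softmax]
  by_cases h : i = j
  · rw [if_pos h, if_pos h, h]
    field_simp
  · rw [if_neg h, if_neg h]
    field_simp
    ring

/-- partial derivatives of the Libra loss with respect to the logits:
`-1/k` on allowed outputs and `p_j / (1 - Σ y_i p_i)` on disallowed outputs. -/
theorem libra_partial_deriv {m : ℕ} (z : Fin m → ℝ) (y : Fin m → ℝ)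
    (hy : ∀ i, y i = 0 ∨ y i = 1)
    (k : ℕ) (hk : (k : ℝ) = ∑ i, y i) (hk1 : 1 ≤ k) (hkm : k < m)
    (hsum : 0 < ∑ i, y i * softmax z i) (hsum1 : (∑ i, y i * softmax z i) < 1)
    (j : Fin m) :
    HasDerivAt
      (fun t : ℝ =>
        Real.log (1 - ∑ i, y i * softmax (Function.update z j t) i)
          - (1 / (k : ℝ)) * ∑ i, y i * Real.log (softmax (Function.update z j t) i))
      (if y j = 1 then -(1 / (k : ℝ))
       else softmax z j / (1 - ∑ i, y i * softmax z i)) (z j) := by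
  have h1S : (1 : ℝ) - ∑ i, y i * softmax z i ≠ 0 :=
    sub_ne_zero.2 (ne_of_lt hsum1).symm
  have hkne : (k : ℝ) ≠ 0 := Nat.cast_ne_zero.2 (by omega)
  -- derivative of S(t)
  have hSder : HasDerivAt (fun t => ∑ i, y i * softmax (Function.update z j t) i)
      (y j * softmax z j - softmax z j * ∑ i, y i * softmax z i) (z j) := by
    have h := HasDerivAt.fun_sum (fun i (_ : i ∈ Finset.univ) =>
      (softmax_deriv z j i).const_mul (y i))
    refine h.congr_deriv (Eq.symm ?_)
    have heach : ∀ i : Fin m,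
        y i * (softmax z i * ((if i = j then 1 else 0) - softmax z j))
        = (if i = j then y i * softmax z i else 0) - y i * softmax z i * softmax z j := by
      intro i; by_cases h : i = j
      · rw [if_pos h, if_pos h]; ring
      · rw [if_neg h, if_neg h]; ring
    rw [eq_comm, Finset.sum_congr rfl (fun i _ => heach i), Finset.sum_sub_distrib,
      Finset.sum_ite_eq' Finset.univ j (fun i => y i * softmax z i), ← Finset.sum_mul]
    simp only [Finset.mem_univ, if_true]
    ring
  -- derivative of log(1 - S(t))
  have hlog1 : HasDerivAt
      (fun t => Real.log (1 - ∑ i, y i * softmax (Function.update z j t) i))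
      ((0 - (y j * softmax z j - softmax z j * ∑ i, y i * softmax z i)) /
        (1 - ∑ i, y i * softmax z i)) (z j) := by
    have hsub := (hasDerivAt_const (z j) (1 : ℝ)).sub hSder
    have hne : ((fun t => (1 : ℝ) - ∑ i, y i * softmax (Function.update z j t) i) (z j)) ≠ 0 := by
      simp only [Function.update_eq_self]
      exact h1S
    have h := hsub.log hne
    refine h.congr_deriv (Eq.symm ?_)
    simp only [Function.update_eq_self, Pi.sub_apply]
  -- derivative of the log-sum term
  have hlogs : HasDerivAt (fun t => ∑ i, y i * Real.log (softmax (Function.update z j t) i))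
      (y j - (k : ℝ) * softmax z j) (z j) := by
    have hterm : ∀ i : Fin m, HasDerivAt
        (fun t => y i * Real.log (softmax (Function.update z j t) i))
        (y i * ((if i = j then 1 else 0) - softmax z j)) (z j) := by
      intro i
      have hne : ((fun t => softmax (Function.update z j t) i) (z j)) ≠ 0 := by
        simp only [Function.update_eq_self]
        exact (softmax_pos z i).ne'
      have h := ((softmax_deriv z j i).log hne).const_mul (y i)
      refine h.congr_deriv (Eq.symm ?_)
      simp only [Function.update_eq_self]
      rw [mul_comm (softmax z i), mul_div_assoc, div_self (softmax_pos z i).ne', mul_one]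
    have h := HasDerivAt.fun_sum (fun i (_ : i ∈ Finset.univ) => hterm i)
    refine h.congr_deriv (Eq.symm ?_)
    have heach : ∀ i : Fin m, y i * ((if i = j then 1 else 0) - softmax z j)
        = (if i = j then y i else 0) - y i * softmax z j := by
      intro i; by_cases h : i = j
      · rw [if_pos h, if_pos h]; ring
      · rw [if_neg h, if_neg h]; ring
    rw [eq_comm, Finset.sum_congr rfl (fun i _ => heach i), Finset.sum_sub_distrib,
      Finset.sum_ite_eq' Finset.univ j y, ← Finset.sum_mul, ← hk]
    simp only [Finset.mem_univ, if_true]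
  have hfinal := hlog1.sub (hlogs.const_mul (1 / (k : ℝ)))
  refine hfinal.congr_deriv (Eq.symm ?_)
  rcases hy j with h0 | h1
  · rw [h0, if_neg (by norm_num : ¬ ((0:ℝ) = 1))]
    field_simp
    ring
  · rw [h1, if_pos rfl]
    field_simp
    ring
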